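/- arXiv:math/0610546 — 2 statements merged into one kernel-verified Lean document; each statement's English description precedes it below -/
import Mathlib

section
/- Let f_n(s) = Σ_k [n-1-k choose k]_{1/q} q^{-binom(k+1,2)} s^k. Then for all n ≥ 0: f_{3n}(-q) = 0, f_{3n+1}(-q) = (-1)^n q^{-n(3n-1)/2}, and f_{3n+2}(-q) = (-1)^n q^{-n(3n+1)/2}. -/
open Finset

/-- The indeterminate `q`, as an element of the field of rational functions over `ℚ`. -/
noncomputable def q : RatFunc ℚ := RatFunc.X

/-- The Gaussian (q-)binomial coefficient `[n choose k]_t` with base `t`,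
defined as `(1-t^(n-k+1))⋯(1-t^n) / ((1-t)⋯(1-t^k))` for `0 ≤ k ≤ n` and `0` otherwise. -/
noncomputable def qb (t : RatFunc ℚ) (n k : ℤ) : RatFunc ℚ :=
  if 0 ≤ k ∧ k ≤ n then
    (∏ i ∈ Finset.range k.toNat, (1 - t ^ (n - (i : ℤ)))) /
      (∏ i ∈ Finset.range k.toNat, (1 - t ^ ((i : ℤ) + 1)))
  else 0

/-- `f_n(s) = Σ_{k=0}^{⌊(n-1)/2⌋} [n-1-k choose k]_{1/q} q^(-binom(k+1,2)) s^k`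
(terms with `2k > n-1` vanish since the q-binomial coefficient is `0` there). -/
noncomputable def f (n : ℕ) (s : RatFunc ℚ) : RatFunc ℚ :=
  ∑ k ∈ Finset.range n,
    qb q⁻¹ ((n : ℤ) - 1 - k) k * q ^ (-((k : ℤ) * (k + 1) / 2)) * s ^ k

lemma hq0 : q ≠ 0 := RatFunc.X_ne_zero
lemma hzq : (q⁻¹ : RatFunc ℚ) ≠ 0 := inv_ne_zero hq0

lemma hqpow (k : ℕ) : q ^ (k+1) ≠ 1 := by
  rw [q, ← RatFunc.algebraMap_X (K := ℚ), ← map_pow, ← map_one (algebraMap (Polynomial ℚ) (RatFunc ℚ))]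
  intro h
  have h2 := RatFunc.algebraMap_injective (K := ℚ) h
  have := congrArg Polynomial.natDegree h2
  simp at this

lemma hfac (k : ℕ) : (1 - q⁻¹ ^ ((k:ℤ)+1)) ≠ 0 := by
  rw [show ((k:ℤ)+1) = ((k+1:ℕ):ℤ) by push_cast; ring, zpow_natCast, inv_pow, sub_ne_zero]
  intro h
  exact hqpow k (by rw [← inv_inv (q ^ (k+1)), ← h, inv_one])

noncomputable def Np (m : ℤ) (k : ℕ) : RatFunc ℚ := ∏ i ∈ range k, (1 - q⁻¹ ^ (m - (i:ℤ)))
noncomputable def Dp (k : ℕ) : RatFunc ℚ := ∏ i ∈ range k, (1 - q⁻¹ ^ ((i:ℤ)+1))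

lemma Dp_ne (k : ℕ) : Dp k ≠ 0 := prod_ne_zero_iff.2 (fun i _ => hfac i)

lemma Dp_succ (k : ℕ) : Dp (k+1) = Dp k * (1 - q⁻¹ ^ ((k:ℤ)+1)) := prod_range_succ _ k

lemma Np_succ (m : ℤ) (k : ℕ) : Np m (k+1) = Np m k * (1 - q⁻¹ ^ (m - (k:ℤ))) := prod_range_succ _ k

lemma Np_succ' (m : ℤ) (k : ℕ) : Np m (k+1) = (1 - q⁻¹ ^ m) * Np (m-1) k := by
  have h := prod_range_succ' (fun i : ℕ => (1 - q⁻¹ ^ (m - (i:ℤ)))) k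
  simp only [Np, h, Nat.cast_zero, sub_zero, Nat.cast_add, Nat.cast_one]
  rw [mul_comm]
  congr 1
  apply prod_congr rfl
  intro i _
  have : m - ((i:ℤ) + 1) = m - 1 - (i:ℤ) := by ring
  rw [this]

lemma Np_self (k : ℕ) : Np (k:ℤ) k = Dp k := by
  rw [Np, Dp, ← prod_range_reflect (fun i : ℕ => (1 - q⁻¹ ^ ((i:ℤ)+1))) k]
  apply prod_congr rfl
  intro i hi
  simp only [mem_range] at hi
  have : ((k - 1 - i : ℕ):ℤ) + 1 = (k:ℤ) - (i:ℤ) := by omega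
  rw [this]

lemma qb_nat (m : ℤ) (k : ℕ) :
    qb q⁻¹ m (k : ℤ) = if (k:ℤ) ≤ m then Np m k / Dp k else 0 := by
  unfold qb Np Dp
  simp

lemma qb_neg (m : ℤ) : qb q⁻¹ m (-1) = 0 := by unfold qb; norm_num

/-- Pascal 1: [m,k] = [m-1,k] + t^{m-k} [m-1,k-1] -/
lemma pascal1 (m : ℤ) (k : ℕ) (h : 1 ≤ m + k) :
    qb q⁻¹ m (k:ℤ) = qb q⁻¹ (m-1) (k:ℤ) + q⁻¹ ^ (m - (k:ℤ)) * qb q⁻¹ (m-1) ((k:ℤ)-1) := by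
  match k with
  | 0 =>
    have h1 : (1:ℤ) ≤ m := by omega
    rw [qb_nat m 0, qb_nat (m-1) 0]
    rw [show ((0:ℕ):ℤ) - 1 = -1 by norm_num, qb_neg]
    simp only [Np, Dp, prod_range_zero, Nat.cast_zero]
    rw [if_pos (by omega), if_pos (by omega)]
    norm_num
  | (j+1) =>
    have hcast : ((j+1:ℕ):ℤ) = (j:ℤ)+1 := by push_cast; ring
    rw [show (((j+1:ℕ)):ℤ) - 1 = ((j:ℕ):ℤ) by push_cast; ring]
    rw [qb_nat m (j+1), qb_nat (m-1) (j+1), qb_nat (m-1) j]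
    rcases lt_trichotomy m ((j:ℤ)+1) with hm | hm | hm
    · rw [if_neg (by push_cast; omega), if_neg (by push_cast; omega), if_neg (by omega)]
      ring
    · rw [if_pos (by push_cast; omega), if_neg (by push_cast; omega), if_pos (by omega)]
      rw [show m - ((j+1:ℕ):ℤ) = 0 by push_cast; omega, zpow_zero, one_mul]
      have e1 : Np m (j+1) = Dp (j+1) := by
        rw [show m = ((j+1:ℕ):ℤ) by push_cast; omega]; exact Np_self (j+1)
      have e2 : Np (m-1) j = Dp j := by
        rw [show m - 1 = ((j:ℕ):ℤ) by push_cast; omega]; exact Np_self j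
      rw [e1, e2, div_self (Dp_ne _), div_self (Dp_ne _)]
      ring
    · rw [if_pos (by push_cast; omega), if_pos (by push_cast; omega), if_pos (by omega)]
      have e3 : q⁻¹ ^ (m - ((j+1:ℕ):ℤ)) * q⁻¹ ^ ((j:ℤ)+1) = q⁻¹ ^ m := by
        rw [← zpow_add₀ hzq]; congr 1; push_cast; ring
      have e1 : Np m (j+1) = (1 - q⁻¹ ^ m) * Np (m-1) j := Np_succ' m j
      have e2 : Np (m-1) (j+1) = Np (m-1) j * (1 - q⁻¹ ^ (m - ((j+1:ℕ):ℤ))) := by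
        rw [Np_succ (m-1) j]; congr 2; push_cast; ring
      rw [e1, e2, Dp_succ, ← e3]
      have h1 := Dp_ne j
      have h2 := hfac j
      have key : q⁻¹ ^ (m - ((j+1:ℕ):ℤ)) * (Np (m-1) j / Dp j)
          = (q⁻¹ ^ (m - ((j+1:ℕ):ℤ)) * Np (m-1) j * (1 - q⁻¹ ^ ((j:ℤ)+1))) / (Dp j * (1 - q⁻¹ ^ ((j:ℤ)+1))) := by
        have hA : q ^ (m - ((j:ℤ)+1)) ≠ 0 := zpow_ne_zero _ hq0
        have hu : (1 - 1 / q ^ ((j:ℤ) + 1)) ≠ 0 := by rw [one_div, ← inv_zpow]; exact h2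
        rw [mul_div_mul_right _ _ h2, mul_div_assoc]
      rw [key, ← add_div]
      congr 1
      ring

/-- Pascal 2: [m,k] = t^k [m-1,k] + [m-1,k-1] -/
lemma pascal2 (m : ℤ) (k : ℕ) (h : 1 ≤ m + k) :
    qb q⁻¹ m (k:ℤ) = q⁻¹ ^ (k:ℤ) * qb q⁻¹ (m-1) (k:ℤ) + qb q⁻¹ (m-1) ((k:ℤ)-1) := by
  match k with
  | 0 =>
    have h1 : (1:ℤ) ≤ m := by omega
    rw [qb_nat m 0, qb_nat (m-1) 0]
    rw [show ((0:ℕ):ℤ) - 1 = -1 by norm_num, qb_neg]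
    simp only [Np, Dp, prod_range_zero, Nat.cast_zero]
    rw [if_pos (by omega), if_pos (by omega)]
    norm_num
  | (j+1) =>
    have hcast : ((j+1:ℕ):ℤ) = (j:ℤ)+1 := by push_cast; ring
    rw [show (((j+1:ℕ)):ℤ) - 1 = ((j:ℕ):ℤ) by push_cast; ring]
    rw [qb_nat m (j+1), qb_nat (m-1) (j+1), qb_nat (m-1) j]
    rcases lt_trichotomy m ((j:ℤ)+1) with hm | hm | hm
    · rw [if_neg (by push_cast; omega), if_neg (by push_cast; omega), if_neg (by omega)]
      ring
    · rw [if_pos (by push_cast; omega), if_neg (by push_cast; omega), if_pos (by omega)]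
      have e1 : Np m (j+1) = Dp (j+1) := by
        rw [show m = ((j+1:ℕ):ℤ) by push_cast; omega]; exact Np_self (j+1)
      have e2 : Np (m-1) j = Dp j := by
        rw [show m - 1 = ((j:ℕ):ℤ) by push_cast; omega]; exact Np_self j
      rw [e1, e2, div_self (Dp_ne _), div_self (Dp_ne _)]
      ring
    · rw [if_pos (by push_cast; omega), if_pos (by push_cast; omega), if_pos (by omega)]
      push_cast
      have e3 : q⁻¹ ^ (m - ((j:ℤ)+1)) * q⁻¹ ^ ((j:ℤ)+1) = q⁻¹ ^ m := by
        rw [← zpow_add₀ hzq]; congr 1; ring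
      have e1 : Np m (j+1) = (1 - q⁻¹ ^ m) * Np (m-1) j := Np_succ' m j
      have e2 : Np (m-1) (j+1) = Np (m-1) j * (1 - q⁻¹ ^ (m - ((j:ℤ)+1))) := by
        rw [Np_succ (m-1) j]; congr 2; ring
      rw [e1, e2, Dp_succ, ← e3]
      have h1 := Dp_ne j
      have h2 := hfac j
      have hX : Np (m-1) j / Dp j
          = (Np (m-1) j * (1 - q⁻¹^((j:ℤ)+1))) / (Dp j * (1 - q⁻¹^((j:ℤ)+1))) := by
        rw [eq_div_iff (mul_ne_zero h1 h2), div_mul_eq_mul_div, mul_comm (Dp j) _, ← mul_assoc,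
          mul_div_assoc, div_self h1, mul_one]
      rw [hX, ← mul_div_assoc, ← add_div]
      congr 1
      ring

lemma qb_nat' (m : ℤ) (k : ℕ) (h : m < (k:ℤ)) : qb q⁻¹ m (k:ℤ) = 0 := by
  rw [qb_nat, if_neg (by omega)]
lemma qpow_mul (a b : ℤ) : q ^ a * q ^ b = q ^ (a+b) := (zpow_add₀ hq0 a b).symm
lemma qpow_inv (a : ℤ) : (q⁻¹ : RatFunc ℚ) ^ a = q ^ (-a) := by
  rw [inv_zpow']

lemma Tsucc (j : ℤ) : ((j+1)*((j+1)+1))/2 = j*(j+1)/2 + (j+1) := by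
  rw [show (j+1)*((j+1)+1) = j*(j+1) + (j+1)*2 by ring, Int.add_mul_ediv_right _ _ two_ne_zero]

lemma key1 (n : ℕ) (s : RatFunc ℚ) :
    f (n+2) s = f (n+1) s + q ^ (-(n:ℤ)) * s * f n (q * s) := by
  unfold f
  have step : ∀ k ∈ range (n+2),
      qb q⁻¹ (((n+2:ℕ) : ℤ) - 1 - k) k * q ^ (-((k : ℤ) * (k + 1) / 2)) * s ^ k
        = qb q⁻¹ (((n+1:ℕ) : ℤ) - 1 - k) k * q ^ (-((k : ℤ) * (k + 1) / 2)) * s ^ k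
          + q⁻¹ ^ (((n+1:ℕ):ℤ) - 2*k) * qb q⁻¹ (((n+1:ℕ):ℤ) - 1 - k) ((k:ℤ)-1)
              * q ^ (-((k : ℤ) * (k + 1) / 2)) * s ^ k := by
    intro k _
    have h := pascal1 (((n+2:ℕ):ℤ) - 1 - k) k (by push_cast; omega)
    rw [show ((n+2:ℕ):ℤ) - 1 - k - 1 = ((n+1:ℕ):ℤ) - 1 - k by push_cast; ring,
        show ((n+2:ℕ):ℤ) - 1 - k - k = ((n+1:ℕ):ℤ) - 2*k by push_cast; ring] at h
    rw [h]; ring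
  rw [Finset.sum_congr rfl step, Finset.sum_add_distrib]
  congr 1
  · -- first sum equals f(n+1)
    rw [Finset.sum_range_succ, qb_nat' _ (n+1) (by push_cast; omega)]
    simp
  · -- second sum
    rw [Finset.sum_range_succ' _ (n+1)]
    rw [show ((0:ℕ):ℤ) - 1 = -1 by norm_num, qb_neg]
    rw [Finset.sum_range_succ]
    rw [show ((n+1:ℕ):ℤ) - 1 = ((n:ℕ):ℤ) by push_cast; ring]
    rw [qb_nat' _ n (by push_cast; omega)]
    simp only [mul_zero, zero_mul, add_zero]
    rw [Finset.mul_sum]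
    apply Finset.sum_congr rfl
    intro j hj
    rw [show ((j+1:ℕ):ℤ) - 1 = (j:ℤ) by push_cast; ring]
    push_cast
    rw [show -(((j:ℤ)+1)*((j:ℤ)+1+1)/2) = -((j:ℤ)*((j:ℤ)+1)/2) - ((j:ℤ)+1) by rw [Tsucc]; ring]
    generalize (j:ℤ)*((j:ℤ)+1)/2 = T
    rw [qpow_inv, mul_pow, pow_succ,
        show (q:RatFunc ℚ)^(j:ℕ) = q^((j:ℤ)) from (zpow_natCast q j).symm,
        show (n:ℤ) - ((j:ℤ)+1) = (n:ℤ)-1-(j:ℤ) by ring]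
    have e : q ^ (-((n:ℤ)+1-2*((j:ℤ)+1))) * q ^ (-T-((j:ℤ)+1)) = q ^ (-(n:ℤ)) * q ^ (-T) * q ^ ((j:ℤ)) := by
      rw [qpow_mul, qpow_mul, qpow_mul]; congr 1; ring
    linear_combination (qb q⁻¹ ((n:ℤ)-1-(j:ℤ)) ((j:ℤ)) * s ^ j * s) * e

lemma qpow_invnat (j : ℕ) : (q⁻¹ : RatFunc ℚ) ^ j = q ^ (-(j:ℤ)) := by
  rw [inv_pow, ← zpow_natCast q j, ← zpow_neg]

lemma key2 (n : ℕ) (s : RatFunc ℚ) :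
    f (n+2) s = f (n+1) (s * q⁻¹) + (s * q⁻¹) * f n (s * q⁻¹) := by
  unfold f
  have step : ∀ k ∈ range (n+2),
      qb q⁻¹ (((n+2:ℕ) : ℤ) - 1 - k) k * q ^ (-((k : ℤ) * (k + 1) / 2)) * s ^ k
        = q⁻¹ ^ ((k:ℕ):ℤ) * qb q⁻¹ (((n+1:ℕ) : ℤ) - 1 - k) k * q ^ (-((k : ℤ) * (k + 1) / 2)) * s ^ k
          + qb q⁻¹ (((n+1:ℕ):ℤ) - 1 - k) ((k:ℤ)-1)
              * q ^ (-((k : ℤ) * (k + 1) / 2)) * s ^ k := by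
    intro k _
    have h := pascal2 (((n+2:ℕ):ℤ) - 1 - k) k (by push_cast; omega)
    rw [show ((n+2:ℕ):ℤ) - 1 - k - 1 = ((n+1:ℕ):ℤ) - 1 - k by push_cast; ring] at h
    rw [h]; ring
  rw [Finset.sum_congr rfl step, Finset.sum_add_distrib]
  congr 1
  · -- first sum equals f(n+1) (s*q⁻¹)
    rw [Finset.sum_range_succ, qb_nat' _ (n+1) (by push_cast; omega)]
    simp only [mul_zero, zero_mul, add_zero]
    apply Finset.sum_congr rfl
    intro k _
    rw [mul_pow, ← zpow_natCast (q⁻¹ : RatFunc ℚ) k]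
    ring
  · -- second sum
    rw [Finset.sum_range_succ' _ (n+1)]
    rw [show ((0:ℕ):ℤ) - 1 = -1 by norm_num, qb_neg]
    rw [Finset.sum_range_succ]
    rw [show ((n+1:ℕ):ℤ) - 1 = ((n:ℕ):ℤ) by push_cast; ring]
    rw [qb_nat' _ n (by push_cast; omega)]
    simp only [mul_zero, zero_mul, add_zero]
    rw [Finset.mul_sum]
    apply Finset.sum_congr rfl
    intro j hj
    rw [show ((j+1:ℕ):ℤ) - 1 = (j:ℤ) by push_cast; ring]
    push_cast
    rw [show -(((j:ℤ)+1)*((j:ℤ)+1+1)/2) = -((j:ℤ)*((j:ℤ)+1)/2) - ((j:ℤ)+1) by rw [Tsucc]; ring]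
    generalize (j:ℤ)*((j:ℤ)+1)/2 = T
    rw [pow_succ, mul_pow, qpow_invnat j,
        show (n:ℤ) - ((j:ℤ)+1) = (n:ℤ)-1-(j:ℤ) by ring]
    have e : q ^ (-T-((j:ℤ)+1)) = q⁻¹ * q ^ (-T) * q ^ (-(j:ℤ)) := by
      rw [show (q⁻¹ : RatFunc ℚ) = q ^ (-1 : ℤ) by rw [zpow_neg_one], qpow_mul, qpow_mul]
      congr 1; ring
    linear_combination (qb q⁻¹ ((n:ℤ)-1-(j:ℤ)) ((j:ℤ)) * s ^ j * s) * e

lemma qmul_half (c A B : ℤ) (h : B = A - c*2) : q ^ c * q ^ (-(A/2)) = q ^ (-(B/2)) := by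
  subst h
  rw [qpow_mul]
  congr 1
  rw [show A - c*2 = A + (-c)*2 by ring, Int.add_mul_ediv_right _ _ two_ne_zero]
  ring

lemma recA (m : ℕ) : f (m+2) (-q) = f (m+1) (-q) - q ^ (1-(m:ℤ)) * f m (-(q^2)) := by
  have h := key1 m (-q)
  rw [show q * (-q) = -(q^2) by ring] at h
  rw [h]
  have e : q ^ (-(m:ℤ)) * q ^ (1:ℤ) = q ^ (1-(m:ℤ)) := by rw [qpow_mul]; congr 1; ring
  rw [zpow_one] at e
  linear_combination (-(f m (-(q^2)))) * e

lemma recC (m : ℕ) : f (m+2) (-(q^2)) = f (m+1) (-q) - q * f m (-q) := by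
  have h := key2 m (-(q^2))
  rw [show (-(q^2) * q⁻¹ : RatFunc ℚ) = -q by
    rw [pow_two, neg_mul, mul_assoc, mul_inv_cancel₀ hq0, mul_one]] at h
  rw [h]; ring

lemma f0 (s : RatFunc ℚ) : f 0 s = 0 := by simp [f]
lemma f1 (s : RatFunc ℚ) : f 1 s = 1 := by norm_num [f, qb]
lemma f2 (s : RatFunc ℚ) : f 2 s = 1 := by
  norm_num [f, Finset.sum_range_succ, qb]

theorem big (n : ℕ) :
    f (3*n) (-q) = 0 ∧
    f (3*n+1) (-q) = (-1) ^ n * q ^ (-((n : ℤ) * (3 * n - 1) / 2)) ∧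
    f (3*n+2) (-q) = (-1) ^ n * q ^ (-((n : ℤ) * (3 * n + 1) / 2)) ∧
    f (3*n) (-(q^2)) = (-1) ^ n *
      (q ^ (-((3*(n:ℤ)-1) * ((n:ℤ)-2) / 2)) - q ^ (-((3*(n:ℤ)-2) * ((n:ℤ)-1) / 2))) ∧
    f (3*n+1) (-(q^2)) = (-1) ^ n * q ^ (-((n : ℤ) * (3 * n - 5) / 2)) ∧
    f (3*n+2) (-(q^2)) = (-1) ^ n * q ^ (-((n : ℤ) * (3 * n - 1) / 2)) := by
  induction n with
  | zero =>
    refine ⟨by norm_num [f0], by norm_num [f1], by norm_num [f2], by norm_num [f0], by norm_num [f1], by norm_num [f2]⟩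
  | succ n ih =>
    obtain ⟨h0, h1, h2, h3, h4, h5⟩ := ih
    have rA1 := recA (3*n+1)
    have rA2 := recA (3*n+2)
    have rA3 := recA (3*n+3)
    have rC1 := recC (3*n+1)
    have rC2 := recC (3*n+2)
    have rC3 := recC (3*n+3)
    simp only [show 3*n+1+2 = 3*n+3 by omega, show 3*n+1+1 = 3*n+2 by omega,
      show 3*n+2+2 = 3*n+4 by omega, show 3*n+2+1 = 3*n+3 by omega,
      show 3*n+3+2 = 3*n+5 by omega, show 3*n+3+1 = 3*n+4 by omega] at rA1 rA2 rA3 rC1 rC2 rC3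
    push_cast at rA1 rA2 rA3 rC1 rC2 rC3 ⊢
    set N : ℤ := (n:ℤ) with hN
    -- G0 : f (3n+3) (-q) = 0
    have G0 : f (3*n+3) (-q) = 0 := by
      rw [rA1, h2, h4]
      have e := qmul_half (1 - (3*N+1)) (N*(3*N-5)) (N*(3*N+1)) (by ring)
      linear_combination (-(-1:RatFunc ℚ)^n) * e
    -- G3 : f (3n+3) (-q²)
    have G3 : f (3*n+3) (-(q^2)) = (-1)^(n+1) *
        (q ^ (-((3*(N+1)-1) * ((N+1)-2) / 2)) - q ^ (-((3*(N+1)-2) * ((N+1)-1) / 2))) := by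
      rw [rC1, h2, h1]
      have e1 := qmul_half 1 (N*(3*N-1)) ((3*(N+1)-1) * ((N+1)-2)) (by ring)
      rw [show (3*(N+1)-2) * ((N+1)-1) = N*(3*N+1) by ring]
      rw [show (q : RatFunc ℚ) ^ (1:ℤ) = q from zpow_one q] at e1
      linear_combination (-(-1:RatFunc ℚ)^n) * e1
    -- G1 : f (3n+4) (-q)
    have G1 : f (3*n+4) (-q) = (-1)^(n+1) * q ^ (-((N+1) * (3*(N+1)-1) / 2)) := by
      rw [rA2, G0, h5]
      have e := qmul_half (1 - (3*N+2)) (N*(3*N-1)) ((N+1)*(3*(N+1)-1)) (by ring)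
      linear_combination (-(-1:RatFunc ℚ)^n) * e
    -- G4 : f (3n+4) (-q²)
    have G4 : f (3*n+4) (-(q^2)) = (-1)^(n+1) * q ^ (-((N+1) * (3*(N+1)-5) / 2)) := by
      rw [rC2, G0, h2]
      have e := qmul_half 1 (N*(3*N+1)) ((N+1)*(3*(N+1)-5)) (by ring)
      rw [show (q : RatFunc ℚ) ^ (1:ℤ) = q from zpow_one q] at e
      linear_combination (-(-1:RatFunc ℚ)^n) * e
    -- G2 : f (3n+5) (-q)
    have G2 : f (3*n+5) (-q) = (-1)^(n+1) * q ^ (-((N+1) * (3*(N+1)+1) / 2)) := by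
      rw [rA3, G1, G3]
      have e1 := qmul_half (1 - (3*N+3)) ((3*(N+1)-1) * ((N+1)-2)) ((N+1)*(3*(N+1)-1)) (by ring)
      have e2 := qmul_half (1 - (3*N+3)) ((3*(N+1)-2) * ((N+1)-1)) ((N+1)*(3*(N+1)+1)) (by ring)
      linear_combination ((-1:RatFunc ℚ)^n) * e1 - ((-1:RatFunc ℚ)^n) * e2
    -- G5 : f (3n+5) (-q²)
    have G5 : f (3*n+5) (-(q^2)) = (-1)^(n+1) * q ^ (-((N+1) * (3*(N+1)-1) / 2)) := by
      rw [rC3, G1, G0]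
      ring
    refine ⟨?_, ?_, ?_, ?_, ?_, ?_⟩
    · rw [show 3*(n+1) = 3*n+3 by omega]; exact G0
    · rw [show 3*(n+1)+1 = 3*n+4 by omega, G1]
    · rw [show 3*(n+1)+2 = 3*n+5 by omega, G2]
    · rw [show 3*(n+1) = 3*n+3 by omega, G3]
    · rw [show 3*(n+1)+1 = 3*n+4 by omega, G4]
    · rw [show 3*(n+1)+2 = 3*n+5 by omega, G5]


/-- Values of `f` at `s = -q`:
`f_{3n}(-q) = 0`, `f_{3n+1}(-q) = (-1)^n q^(-n(3n-1)/2)`, `f_{3n+2}(-q) = (-1)^n q^(-n(3n+1)/2)`. -/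
theorem stmt_10 (n : ℕ) :
    f (3 * n) (-q) = 0 ∧
    f (3 * n + 1) (-q) = (-1) ^ n * q ^ (-((n : ℤ) * (3 * n - 1) / 2)) ∧
    f (3 * n + 2) (-q) = (-1) ^ n * q ^ (-((n : ℤ) * (3 * n + 1) / 2)) :=
  ⟨(big n).1, (big n).2.1, (big n).2.2.1⟩
end

section
/- Define f(k,s) by the recurrence f(k,s) = (1+q^{k-1}) f(k-1,s) - q^{k-2} s f(k-2,s) with f(0,s) = 0, f(1,s) = 1. Then f(k,s) = Σ_{j=0}^{⌊(k-1)/2⌋} (-1)^j q^{j^2} s^j [k-j-1 choose j]_{q^2} Π_{i=1}^{k-1-2j} (1+q^i) for all k ≥ 0. -/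
open Finset

lemma q_pow_ne_one (m : ℕ) (hm : 1 ≤ m) : (q : RatFunc ℚ) ^ m ≠ 1 := by
  intro h
  have h2 : (algebraMap (Polynomial ℚ) (RatFunc ℚ)) (Polynomial.X ^ m) =
      (algebraMap (Polynomial ℚ) (RatFunc ℚ)) 1 := by
    rw [map_pow, map_one, RatFunc.algebraMap_X]; exact h
  have h3 := RatFunc.algebraMap_injective ℚ h2
  have h4 := congrArg Polynomial.natDegree h3
  simp [Polynomial.natDegree_X_pow] at h4
  omega

/-- `gp m = ∏_{i=1}^m (1 - q^{2i})`. -/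
noncomputable def gp (m : ℕ) : RatFunc ℚ := ∏ i ∈ Finset.range m, (1 - (q^2) ^ (i+1))

lemma one_sub_ne (m : ℕ) : (1 : RatFunc ℚ) - (q^2) ^ (m+1) ≠ 0 := by
  intro h
  have : (q^2)^(m+1) = 1 := by linear_combination -h
  rw [← pow_mul] at this
  exact q_pow_ne_one (2*(m+1)) (by omega) this

lemma gp_ne_zero (m : ℕ) : gp m ≠ 0 := by
  unfold gp
  exact Finset.prod_ne_zero_iff.mpr (fun i _ => one_sub_ne i)

lemma gp_succ (m : ℕ) : gp (m+1) = gp m * (1 - (q^2)^(m+1)) := Finset.prod_range_succ _ _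

lemma qb_nat_s15 (n k : ℕ) (hk : k ≤ n) :
    qb (q^2) (n : ℤ) (k : ℤ) = gp n / (gp k * gp (n - k)) := by
  rw [qb, if_pos ⟨Int.natCast_nonneg k, by exact_mod_cast hk⟩]
  have htn : ((k : ℤ)).toNat = k := Int.toNat_natCast k
  rw [htn]
  have hnum : (∏ i ∈ Finset.range k, (1 - (q^2) ^ ((n : ℤ) - (i : ℤ))))
      = ∏ i ∈ Finset.range k, (1 - (q^2) ^ (n - i : ℕ)) := by
    apply Finset.prod_congr rfl
    intro i hi
    rw [Finset.mem_range] at hi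
    have e : (n : ℤ) - (i : ℤ) = ((n - i : ℕ) : ℤ) := by omega
    rw [e, zpow_natCast]
  have hden : (∏ i ∈ Finset.range k, (1 - (q^2) ^ ((i : ℤ) + 1)))
      = gp k := by
    apply Finset.prod_congr rfl
    intro i _
    have e : (i : ℤ) + 1 = ((i + 1 : ℕ) : ℤ) := by omega
    rw [e, zpow_natCast]
  rw [hnum, hden]
  have hsplit : gp n = gp (n - k) * ∏ i ∈ Finset.range k, (1 - (q^2) ^ (n - k + i + 1)) := by
    unfold gp
    nth_rewrite 1 [show n = (n-k)+k from by omega]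
    rw [Finset.prod_range_add]
  have hrefl : (∏ i ∈ Finset.range k, (1 - (q^2) ^ (n - i : ℕ)))
      = ∏ i ∈ Finset.range k, (1 - (q^2) ^ (n - k + i + 1)) := by
    rw [← Finset.prod_range_reflect (fun i => (1 - (q^2 : RatFunc ℚ) ^ (n - k + i + 1))) k]
    apply Finset.prod_congr rfl
    intro i hi
    rw [Finset.mem_range] at hi
    congr 2
    omega
  rw [hrefl, hsplit]
  rw [eq_div_iff (by exact mul_ne_zero (gp_ne_zero k) (gp_ne_zero (n-k)))]
  field_simp [gp_ne_zero]

lemma qb_of_not (n k : ℤ) (h : ¬ (0 ≤ k ∧ k ≤ n)) : qb (q^2) n k = 0 := if_neg h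

lemma qb_diag (n : ℕ) : qb (q^2) (n : ℤ) (n : ℤ) = 1 := by
  rw [qb_nat_s15 n n le_rfl]
  simp only [Nat.sub_self]
  have h0 : gp 0 = 1 := by simp [gp]
  rw [h0, mul_one, div_self (gp_ne_zero n)]

lemma qb_zero (n : ℕ) : qb (q^2) (n : ℤ) 0 = 1 := by
  have := qb_nat_s15 n 0 (Nat.zero_le n)
  simp only [Nat.cast_zero, Nat.sub_zero] at this
  rw [this]
  have h0 : gp 0 = 1 := by simp [gp]
  rw [h0, one_mul, div_self (gp_ne_zero n)]

lemma pascal1_s15 (a b : ℕ) :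
    qb (q^2) ((a+b+2 : ℕ) : ℤ) ((b+1 : ℕ) : ℤ)
      = qb (q^2) ((a+b+1 : ℕ) : ℤ) ((b+1 : ℕ) : ℤ)
        + (q^2)^(a+1) * qb (q^2) ((a+b+1 : ℕ) : ℤ) ((b : ℕ) : ℤ) := by
  rw [qb_nat_s15 (a+b+2) (b+1) (by omega), qb_nat_s15 (a+b+1) (b+1) (by omega),
    qb_nat_s15 (a+b+1) b (by omega)]
  have e1 : a+b+2 - (b+1) = a+1 := by omega
  have e2 : a+b+1 - (b+1) = a := by omega
  have e3 : a+b+1 - b = a+1 := by omega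
  rw [e1, e2, e3, gp_succ (a+b+1), gp_succ a, gp_succ b]
  field_simp [gp_ne_zero, one_sub_ne]
  ring

lemma pascal2_s15 (a b : ℕ) :
    qb (q^2) ((a+b+2 : ℕ) : ℤ) ((b+1 : ℕ) : ℤ)
      = (q^2)^(b+1) * qb (q^2) ((a+b+1 : ℕ) : ℤ) ((b+1 : ℕ) : ℤ)
        + qb (q^2) ((a+b+1 : ℕ) : ℤ) ((b : ℕ) : ℤ) := by
  rw [qb_nat_s15 (a+b+2) (b+1) (by omega), qb_nat_s15 (a+b+1) (b+1) (by omega),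
    qb_nat_s15 (a+b+1) b (by omega)]
  have e1 : a+b+2 - (b+1) = a+1 := by omega
  have e2 : a+b+1 - (b+1) = a := by omega
  have e3 : a+b+1 - b = a+1 := by omega
  rw [e1, e2, e3, gp_succ (a+b+1), gp_succ a, gp_succ b]
  field_simp [gp_ne_zero, one_sub_ne]
  ring
noncomputable def term (k j : ℕ) (s : RatFunc ℚ) : RatFunc ℚ :=
  (-1 : RatFunc ℚ) ^ j * q ^ (j ^ 2) * s ^ j * qb (q ^ 2) ((k : ℤ) - j - 1) j
    * ∏ i ∈ Finset.range (k - 1 - 2 * j), (1 + q ^ (i + 1))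

lemma term_zero (k j : ℕ) (h : k ≤ 2 * j) (s : RatFunc ℚ) : term k j s = 0 := by
  unfold term
  rw [qb_of_not ((k : ℤ) - j - 1) j (by push_neg; intro _; omega)]
  ring

lemma term_rec0 (k : ℕ) (s : RatFunc ℚ) :
    term (k+2) 0 s = (1 + q ^ (k+1)) * term (k+1) 0 s := by
  unfold term
  simp only [Nat.cast_zero]
  rw [show ((k+2 : ℕ) : ℤ) - 0 - 1 = ((k+1 : ℕ) : ℤ) from by omega]
  rw [show ((k+1 : ℕ) : ℤ) - 0 - 1 = ((k : ℕ) : ℤ) from by omega]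
  rw [qb_zero (k+1), qb_zero k]
  rw [show k+2-1-2*0 = k+1 from by omega, show k+1-1-2*0 = k from by omega]
  rw [Finset.prod_range_succ]
  ring

lemma term_rec (k j : ℕ) (s : RatFunc ℚ) :
    term (k+2) (j+1) s = (1 + q ^ (k+1)) * term (k+1) (j+1) s - q ^ k * s * term k j s := by
  obtain h | h | h : 2*j+2 ≤ k ∨ k = 2*j+1 ∨ k ≤ 2*j := by omega
  · -- case A
    obtain ⟨r, rfl⟩ : ∃ r, k = 2*j+2+r := ⟨k - (2*j+2), by omega⟩
    unfold term
    rw [show ((2*j+2+r+2 : ℕ) : ℤ) - ((j+1 : ℕ) : ℤ) - 1 = ((r+j+2 : ℕ) : ℤ) from by omega]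
    rw [show ((2*j+2+r+1 : ℕ) : ℤ) - ((j+1 : ℕ) : ℤ) - 1 = ((r+j+1 : ℕ) : ℤ) from by omega]
    rw [show ((2*j+2+r : ℕ) : ℤ) - ((j : ℕ) : ℤ) - 1 = ((r+j+1 : ℕ) : ℤ) from by omega]
    rw [show 2*j+2+r+2-1-2*(j+1) = r+1 from by omega]
    rw [show 2*j+2+r+1-1-2*(j+1) = r from by omega]
    rw [show 2*j+2+r-1-2*j = r+1 from by omega]
    have h1 := pascal1_s15 r j
    have h2 := pascal2_s15 r j
    rw [Finset.prod_range_succ]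
    linear_combination
      ((-1 : RatFunc ℚ)^(j+1) * q^((j+1)^2) * s^(j+1)
        * ∏ i ∈ Finset.range r, (1 + q ^ (i + 1))) * h1
      + ((-1 : RatFunc ℚ)^(j+1) * q^((j+1)^2) * s^(j+1) * q^(r+1)
        * ∏ i ∈ Finset.range r, (1 + q ^ (i + 1))) * h2
  · -- case B
    subst h
    unfold term
    rw [show ((2*j+1+2 : ℕ) : ℤ) - ((j+1 : ℕ) : ℤ) - 1 = ((j+1 : ℕ) : ℤ) from by omega]
    rw [show ((2*j+1+1 : ℕ) : ℤ) - ((j+1 : ℕ) : ℤ) - 1 = ((j : ℕ) : ℤ) from by omega]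
    rw [show ((2*j+1 : ℕ) : ℤ) - ((j : ℕ) : ℤ) - 1 = ((j : ℕ) : ℤ) from by omega]
    rw [qb_diag (j+1), qb_diag j]
    rw [qb_of_not ((j : ℕ) : ℤ) ((j+1 : ℕ) : ℤ) (by push_neg; intro _; omega)]
    rw [show 2*j+1+2-1-2*(j+1) = 0 from by omega]
    rw [show 2*j+1+1-1-2*(j+1) = 0 from by omega]
    rw [show 2*j+1-1-2*j = 0 from by omega]
    rw [Finset.prod_range_zero]
    ring
  · -- case C
    unfold term
    rw [qb_of_not (((k+2 : ℕ) : ℤ) - ((j+1 : ℕ) : ℤ) - 1) ((j+1 : ℕ) : ℤ)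
      (by push_neg; intro _; push_cast; omega)]
    rw [qb_of_not (((k+1 : ℕ) : ℤ) - ((j+1 : ℕ) : ℤ) - 1) ((j+1 : ℕ) : ℤ)
      (by push_neg; intro _; push_cast; omega)]
    rw [qb_of_not (((k : ℕ) : ℤ) - ((j : ℕ) : ℤ) - 1) ((j : ℕ) : ℤ)
      (by push_neg; intro _; omega)]
    ring

lemma sum_ext (m N : ℕ) (hN : (m-1)/2+1 ≤ N) (s : RatFunc ℚ) :
    ∑ j ∈ Finset.range ((m-1)/2+1), term m j s = ∑ j ∈ Finset.range N, term m j s := by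
  apply Finset.sum_subset
  · exact Finset.range_subset_range.mpr hN
  · intro j _ hj
    rw [Finset.mem_range, not_lt] at hj
    exact term_zero m j (by omega) s

/-- Formula (2.12): if `f(0,s)=0`, `f(1,s)=1` and
`f(k+2,s) = (1+q^(k+1)) f(k+1,s) - q^k s f(k,s)`, then
`f(k,s) = Σ_{j=0}^{⌊(k-1)/2⌋} (-1)^j q^(j²) s^j [k-j-1 choose j]_{q²} Π_{i=1}^{k-1-2j} (1+q^i)`. -/
theorem stmt_15 (f : ℕ → RatFunc ℚ → RatFunc ℚ)
    (h0 : ∀ s, f 0 s = 0) (h1 : ∀ s, f 1 s = 1)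
    (hrec : ∀ k s, f (k + 2) s = (1 + q ^ (k + 1)) * f (k + 1) s - q ^ k * s * f k s) :
    ∀ (k : ℕ) (s : RatFunc ℚ),
      f k s = ∑ j ∈ Finset.range ((k - 1) / 2 + 1),
        (-1 : RatFunc ℚ) ^ j * q ^ (j ^ 2) * s ^ j * qb (q ^ 2) ((k : ℤ) - j - 1) j
          * ∏ i ∈ Finset.range (k - 1 - 2 * j), (1 + q ^ (i + 1)) := by
  suffices key : ∀ (k : ℕ) (s : RatFunc ℚ),
      f k s = ∑ j ∈ Finset.range ((k - 1) / 2 + 1), term k j s by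
    intro k s
    rw [key k s]
    apply Finset.sum_congr rfl
    intro j _
    rfl
  intro k
  induction k using Nat.twoStepInduction with
  | zero =>
    intro s
    rw [h0 s]
    rw [show (0-1)/2+1 = 1 from rfl, Finset.sum_range_one]
    rw [term_zero 0 0 (by omega) s]
  | one =>
    intro s
    rw [h1 s]
    rw [show (1-1)/2+1 = 1 from rfl, Finset.sum_range_one]
    unfold term
    simp only [Nat.cast_zero]
    rw [show ((1 : ℕ) : ℤ) - 0 - 1 = ((0 : ℕ) : ℤ) from by omega]
    rw [qb_zero 0]
    rw [show 1-1-2*0 = 0 from by omega, Finset.prod_range_zero]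
    ring
  | more k ih1 ih2 =>
    intro s
    rw [hrec k s, ih1 s, ih2 s]
    rw [sum_ext (k+2) (k+2) (by omega) s, sum_ext (k+1) (k+2) (by omega) s,
      sum_ext k (k+1) (by omega) s]
    rw [Finset.sum_range_succ' (fun j => term (k+2) j s) (k+1)]
    rw [Finset.sum_range_succ' (fun j => term (k+1) j s) (k+1)]
    rw [Finset.sum_congr rfl (fun j _ => term_rec k j s)]
    rw [term_rec0 k s, Finset.sum_sub_distrib]
    simp only [← Finset.mul_sum]
    ring
end
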